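/- An automorphism ν of U belongs to N (the normalizer of (K*)^λ in Aut(U)) if and only if ν = λ_m ∘ ζ for some m ∈ K* and some ζ ∈ Aut(U) that is central with respect to the basis (b_i), i.e., ζ maps each b_i into the Z-span of the (b_j), where Z is the center of K. -/

import Mathlib

/-!
Both sides reduce to a statement about the coordinates `a i j` of `ν (b i)`. In coordinates,
`λ_k ν = ν λ_l` reads `a i j * k = l * a i j` for all `i, j`. If some `a i₀ j₀ = m` is nonzero, this
forces `l = m k m⁻¹`, so every `m⁻¹ * a i j` commutes with every `k`, i.e. lies in the center; then
`ζ = ν λ_{m⁻¹}` is central and `ν = ζ λ_m`. Conversely, coordinates `m * z` with `z` central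
satisfy the relation with `l = m k m⁻¹`.
-/

open Module

theorem forall_exists_mul_eq_mul_iff_exists_inv_mul_mem_center {K ι : Type*} [DivisionRing K]
    (a : ι → K) :
    (∀ k : K, k ≠ 0 → ∃ l : K, l ≠ 0 ∧ ∀ t, a t * k = l * a t) ↔
      ∃ m : K, m ≠ 0 ∧ ∀ t, m⁻¹ * a t ∈ Subring.center K := by
  constructor
  · intro h
    by_cases ha : ∃ t, a t ≠ 0
    · obtain ⟨t₀, hm⟩ := ha
      refine ⟨a t₀, hm, fun t => Subring.mem_center_iff.mpr fun g => ?_⟩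
      rcases eq_or_ne g 0 with rfl | hg
      · simp
      obtain ⟨l, -, hl⟩ := h g hg
      have hl_eq : l = a t₀ * g * (a t₀)⁻¹ := by rw [hl t₀, mul_inv_cancel_right₀ hm]
      calc g * ((a t₀)⁻¹ * a t) = (a t₀)⁻¹ * (l * a t) := by
            simp only [hl_eq, mul_assoc, inv_mul_cancel_left₀ hm]
        _ = (a t₀)⁻¹ * a t * g := by rw [← hl t, mul_assoc]
    · push Not at ha
      exact ⟨1, one_ne_zero, fun t => by simp [ha t]⟩
  · rintro ⟨m, hm, hc⟩ k hk
    refine ⟨m * k * m⁻¹, by simp [hm, hk], fun t => ?_⟩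
    calc a t * k = m * (m⁻¹ * a t * k) := by simp only [mul_assoc, mul_inv_cancel_left₀ hm]
      _ = m * k * m⁻¹ * a t := by
          rw [← Subring.mem_center_iff.mp (hc t) k]; simp only [mul_assoc]

section

variable {K U I : Type*} [DivisionRing K] [AddCommGroup U] [Module K U] (b : Basis I K U)
  {lam : K → Module.End K U}

theorem repr_lam_apply (hlam : ∀ (k : K) (i : I), lam k (b i) = k • b i) (k : K) (u : U)
    (j : I) : b.repr (lam k u) j = b.repr u j * k := by
  have h : b.coord j ∘ₗ lam k = LinearMap.toSpanSingleton K K k ∘ₗ b.coord j := b.ext fun i => by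
    rcases eq_or_ne i j with rfl | hij
    · simp [hlam]
    · simp [hlam, hij]
  simpa using LinearMap.congr_fun h u

theorem lam_comp_lam (hlam : ∀ (k : K) (i : I), lam k (b i) = k • b i) (k l : K) :
    lam k ∘ₗ lam l = lam (l * k) :=
  b.ext fun i => by simp [hlam, smul_smul]

theorem lam_one (hlam : ∀ (k : K) (i : I), lam k (b i) = k • b i) : lam 1 = LinearMap.id :=
  b.ext fun i => by simp [hlam]

theorem lam_comp_eq_comp_lam_iff (hlam : ∀ (k : K) (i : I), lam k (b i) = k • b i)
    (f : U →ₗ[K] U) (k l : K) :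
    lam k ∘ₗ f = f ∘ₗ lam l ↔ ∀ i j, b.repr (f (b i)) j * k = l * b.repr (f (b i)) j := by
  calc _ ↔ ∀ i, (lam k ∘ₗ f) (b i) = (f ∘ₗ lam l) (b i) := ⟨fun h i => by rw [h], b.ext⟩
    _ ↔ _ := forall_congr' fun i => by simp [b.ext_elem_iff, repr_lam_apply b hlam, hlam]

theorem exists_central_comp_lam_eq_iff (hlam : ∀ (k : K) (i : I), lam k (b i) = k • b i)
    (ν : U ≃ₗ[K] U) {m : K} (hm : m ≠ 0) :
    (∃ ζ : U ≃ₗ[K] U, (∀ i j : I, b.repr (ζ (b i)) j ∈ Subring.center K) ∧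
        (ν : U →ₗ[K] U) = (ζ : U →ₗ[K] U) ∘ₗ lam m) ↔
      ∀ i j, m⁻¹ * b.repr (ν (b i)) j ∈ Subring.center K := by
  constructor
  · rintro ⟨ζ, hζ, hν⟩ i j
    have h := congrArg (fun u => b.repr u j) (LinearMap.congr_fun hν (b i))
    simp only [LinearEquiv.coe_coe, LinearMap.comp_apply, hlam, map_smul, Finsupp.smul_apply,
      smul_eq_mul] at h
    simpa [h, inv_mul_cancel_left₀ hm] using hζ i j
  · intro hc
    let μ : U ≃ₗ[K] U := LinearEquiv.ofLinearMap (lam m⁻¹) (lam m)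
      (by rw [lam_comp_lam b hlam, mul_inv_cancel₀ hm, lam_one b hlam])
      (by rw [lam_comp_lam b hlam, inv_mul_cancel₀ hm, lam_one b hlam])
    refine ⟨μ.trans ν, fun i j => by simpa [μ, hlam] using hc i j, ?_⟩
    rw [LinearEquiv.coe_trans, LinearMap.comp_assoc]
    simp [μ, lam_comp_lam b hlam, mul_inv_cancel₀ hm, lam_one b hlam]

end

theorem stmt12_general {K U I : Type*} [DivisionRing K] [AddCommGroup U] [Module K U]
    (b : Module.Basis I K U) (lam : K → Module.End K U)
    (hlam : ∀ (k : K) (i : I), lam k (b i) = k • b i)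
    (ν : U ≃ₗ[K] U) :
    (∀ k : K, k ≠ 0 → ∃ l : K, l ≠ 0 ∧
        lam k ∘ₗ (ν : U →ₗ[K] U) = (ν : U →ₗ[K] U) ∘ₗ lam l) ↔
    ∃ (m : K) (ζ : U ≃ₗ[K] U), m ≠ 0 ∧
      (∀ i j : I, b.repr (ζ (b i)) j ∈ Subring.center K) ∧
      (ν : U →ₗ[K] U) = (ζ : U →ₗ[K] U) ∘ₗ lam m := by
  let a : I × I → K := fun t => b.repr (ν (b t.1)) t.2
  calc _ ↔ ∀ k : K, k ≠ 0 → ∃ l : K, l ≠ 0 ∧ ∀ t, a t * k = l * a t := by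
        simp only [lam_comp_eq_comp_lam_iff b hlam, LinearEquiv.coe_coe, Prod.forall, a]
    _ ↔ ∃ m : K, m ≠ 0 ∧ ∀ t, m⁻¹ * a t ∈ Subring.center K :=
        forall_exists_mul_eq_mul_iff_exists_inv_mul_mem_center a
    _ ↔ _ := by
        simp only [exists_and_left, Prod.forall, a]
        exact exists_congr fun m =>
          and_congr_right fun hm => (exists_central_comp_lam_eq_iff b hlam ν hm).symm

/-- `ν ∈ N` (the normalizer condition `∀ k ≠ 0, ∃ l ≠ 0, νλ_k = λ_l ν`, in
right-operator notation `lam k ∘ₗ ν = ν ∘ₗ lam l`) iff `ν = λ_m ζ` (as functions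
`ζ ∘ₗ lam m`) for some `m ∈ K*` and some `ζ ∈ Aut(U)` central w.r.t. `(b i)`,
i.e. all coordinates of each `ζ (b i)` lie in the center `Z` of `K`. -/
theorem stmt12 {K U I : Type*} [DivisionRing K] [AddCommGroup U] [Module K U]
    [Nonempty I] (b : Module.Basis I K U) (lam : K → Module.End K U)
    (hlam : ∀ (k : K) (i : I), lam k (b i) = k • b i)
    (ν : U ≃ₗ[K] U) :
    (∀ k : K, k ≠ 0 → ∃ l : K, l ≠ 0 ∧
        lam k ∘ₗ (ν : U →ₗ[K] U) = (ν : U →ₗ[K] U) ∘ₗ lam l) ↔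
    ∃ (m : K) (ζ : U ≃ₗ[K] U), m ≠ 0 ∧
      (∀ i j : I, b.repr (ζ (b i)) j ∈ Subring.center K) ∧
      (ν : U →ₗ[K] U) = (ζ : U →ₗ[K] U) ∘ₗ lam m :=
  stmt12_general b lam hlam ν
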